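/- arXiv:1307.5188 — 2 statements merged into one kernel-verified Lean document; each statement's English description precedes it below -/
import Mathlib

section
/- For an integer k and integers n ≥ 1 and 1 ≤ j ≤ n, one has Σ_{m=j}^{n} ( C(m,j) / (m-j+1)^k ) S₁(n,m) = Σ_{l=0}^{n-j} Σ_{l_1+⋯+l_n=l} ( (n-1)! / (l_1!⋯l_n!(n-1-l)!) ) · C(n-l, j) · B_{l_1}⋯B_{l_n} / (n-l-j+1)^k, where the inner sum ranges over n-tuples of nonnegative integers l_1,…,l_n summing to l. -/
open PowerSeries Finset

/-- Composition `F(G(t))` of formal power series (intended for `G` with zero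
constant term, in which case `coeff n (G ^ m) = 0` for `m > n` and the finite
sum below computes the usual composition). -/
noncomputable def psComp (F G : PowerSeries ℝ) : PowerSeries ℝ :=
  PowerSeries.mk fun n => ∑ m ∈ Finset.range (n + 1),
    (PowerSeries.coeff m F) * (PowerSeries.coeff n (G ^ m))

/-- The formal power series of `log (1 + t)`. -/
noncomputable def logSeries : PowerSeries ℝ :=
  PowerSeries.mk fun n => if n = 0 then 0 else (-1) ^ (n + 1) / n

/-- The polylogarithm factorial function `Lif_k(t) = ∑_{m ≥ 0} t^m / (m! (m+1)^k)`. -/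
noncomputable def Lif (k : ℤ) : PowerSeries ℝ :=
  PowerSeries.mk fun m => 1 / ((m.factorial : ℝ) * ((m : ℝ) + 1) ^ k)

/-- The poly-Cauchy polynomial of the first kind `C_n^{(k)}(x)`, defined by
`Lif_k(log(1+t)) / (1+t)^x = ∑_{n ≥ 0} C_n^{(k)}(x) t^n / n!`, where
`(1+t)^{-x} = exp (-x · log (1+t))`. -/
noncomputable def polyCauchy (k : ℤ) (n : ℕ) (x : ℝ) : ℝ :=
  (n.factorial : ℝ) * PowerSeries.coeff n
    (psComp (Lif k) logSeries *
      psComp (PowerSeries.rescale (-x) (PowerSeries.exp ℝ)) logSeries)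

/-- The (signed) Stirling numbers of the first kind `S₁(l, m)`, defined by
`(log (1+t))^m = m! ∑_{l ≥ m} S₁(l,m) t^l / l!`. -/
noncomputable def S1 (l m : ℕ) : ℝ :=
  (l.factorial : ℝ) / (m.factorial : ℝ) * PowerSeries.coeff l (logSeries ^ m)

/-- The ordinary Bernoulli numbers, via `t/(e^t - 1) = ∑ B_n t^n/n!`;
here `(mk fun m => 1/(m+1)!)` is the series `(e^t - 1)/t`. -/
noncomputable def Bern (n : ℕ) : ℝ :=
  (n.factorial : ℝ) * PowerSeries.coeff n
    (PowerSeries.mk fun m => (1 : ℝ) / (m + 1).factorial)⁻¹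

/-- The Bernoulli polynomial of order `r`, via `(t/(e^t-1))^r e^{xt} = ∑ B_n^{(r)}(x) t^n/n!`. -/
noncomputable def bernPoly (r : ℕ) (n : ℕ) (x : ℝ) : ℝ :=
  (n.factorial : ℝ) * PowerSeries.coeff n
    (((PowerSeries.mk fun m => (1 : ℝ) / (m + 1).factorial)⁻¹) ^ r *
      PowerSeries.rescale x (PowerSeries.exp ℝ))

/-- The series `log(1+t)/t`, so that `t / log(1+t) = Dlog⁻¹`. -/
noncomputable def Dlog : PowerSeries ℝ :=
  PowerSeries.mk fun n => (-1) ^ n / ((n : ℝ) + 1)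

/-- The Cauchy numbers of the first kind, via `t/log(1+t) = ∑ C_n t^n/n!`. -/
noncomputable def cauchyNum (n : ℕ) : ℝ :=
  (n.factorial : ℝ) * PowerSeries.coeff n Dlog⁻¹

/-- The numbers `T_n^{(r,k)}`, via
`(t/log(1+t))^r · Lif_k(log(1+t)) = ∑ T_n^{(r,k)} t^n/n!`. -/
noncomputable def T (r : ℕ) (k : ℤ) (n : ℕ) : ℝ :=
  (n.factorial : ℝ) * PowerSeries.coeff n (Dlog⁻¹ ^ r * psComp (Lif k) logSeries)

/-- The rising factorial `x^{(m)} = x (x+1) ⋯ (x+m-1)`. -/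
noncomputable def risingFactorial (x : ℝ) (m : ℕ) : ℝ :=
  ∏ i ∈ Finset.range m, (x + i)

/-- Carlitz's polynomials `β_n^{(r)}(x)`, via `(t/log(1+t))^r (1+t)^x = ∑ β_n^{(r)}(x) t^n/n!`,
where `(1+t)^x = exp (x log (1+t))`. -/
noncomputable def carlitz (r : ℕ) (n : ℕ) (x : ℝ) : ℝ :=
  (n.factorial : ℝ) * PowerSeries.coeff n
    (Dlog⁻¹ ^ r * psComp (PowerSeries.rescale x (PowerSeries.exp ℝ)) logSeries)

/-! Put `L(t) = log (1 + t)` and `B(t) = t / (e^t - 1)`. Since `L` is the compositional inverse of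
`e^t - 1 = t / B(t)`, Lagrange inversion gives `n [tⁿ] Lᵐ = m [t^{n-m}] Bⁿ`, i.e.
`S₁(n, m) = (n-1)!/(m-1)! · [t^{n-m}] Bⁿ`. Instead of general Lagrange inversion we check this
identity directly: the differential equations `(1 + t) L' = 1` and `t B' = B - B² - t B` give
recurrences for the coefficients of `Lᵐ` and `Bⁿ` under which both sides propagate in the same
way. Substituting `m = n - l` and expanding `[tˡ] Bⁿ` over the `n`-tuples summing to `l` yields
the right-hand side term by term. -/

noncomputable def expSubOneDivX : PowerSeries ℝ :=
  PowerSeries.mk fun m => (1 : ℝ) / (m + 1).factorial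

theorem constantCoeff_expSubOneDivX : constantCoeff expSubOneDivX = 1 := by
  simp [expSubOneDivX]

theorem X_mul_derivative_expSubOneDivX :
    X * d⁄dX ℝ expSubOneDivX = 1 + X * expSubOneDivX - expSubOneDivX := by
  ext (_ | m)
  · simp [expSubOneDivX, coeff_zero_eq_constantCoeff]
  · simp only [coeff_succ_X_mul, coeff_derivative, map_add, map_sub, expSubOneDivX, coeff_mk,
      coeff_one, if_neg (Nat.succ_ne_zero m), Nat.factorial_succ (m + 1)]
    field_simp
    push_cast
    ring

theorem X_mul_derivative_inv_expSubOneDivX :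
    X * d⁄dX ℝ expSubOneDivX⁻¹ =
      expSubOneDivX⁻¹ - expSubOneDivX⁻¹ ^ 2 - X * expSubOneDivX⁻¹ := by
  have hinv : expSubOneDivX⁻¹ * expSubOneDivX = 1 :=
    PowerSeries.inv_mul_cancel _ (by simp [constantCoeff_expSubOneDivX])
  rw [derivative_inv', mul_left_comm, X_mul_derivative_expSubOneDivX]
  linear_combination (expSubOneDivX⁻¹ * (1 - X)) * hinv

theorem X_mul_derivative_inv_expSubOneDivX_pow (n : ℕ) :
    X * d⁄dX ℝ (expSubOneDivX⁻¹ ^ n) =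
      (n : ℝ) • (expSubOneDivX⁻¹ ^ n - expSubOneDivX⁻¹ ^ (n + 1) - X * expSubOneDivX⁻¹ ^ n) := by
  rcases n with _ | n
  · simp
  rw [Derivation.leibniz_pow, Nat.add_sub_cancel, nsmul_eq_mul, smul_eq_C_mul, map_natCast]
  linear_combination ((n + 1 : ℕ) * expSubOneDivX⁻¹ ^ n) * X_mul_derivative_inv_expSubOneDivX

theorem coeff_inv_expSubOneDivX_pow_succ_succ (n s : ℕ) :
    (n : ℝ) * coeff (s + 1) (expSubOneDivX⁻¹ ^ (n + 1)) =
      ((n : ℝ) - s - 1) * coeff (s + 1) (expSubOneDivX⁻¹ ^ n) -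
        n * coeff s (expSubOneDivX⁻¹ ^ n) := by
  have h := congrArg (coeff (s + 1)) (X_mul_derivative_inv_expSubOneDivX_pow n)
  simp only [coeff_succ_X_mul, coeff_derivative, map_smul, map_sub, smul_eq_mul] at h
  linear_combination h

theorem coeff_zero_inv_expSubOneDivX_pow (n : ℕ) : coeff 0 (expSubOneDivX⁻¹ ^ n) = 1 := by
  simp [coeff_zero_eq_constantCoeff, constantCoeff_expSubOneDivX]

theorem logSeries_eq_X_mul_Dlog : logSeries = X * Dlog := by
  ext (_ | m)
  · simp [logSeries]
  · simp only [coeff_succ_X_mul, logSeries, Dlog, coeff_mk, if_neg (Nat.succ_ne_zero m)]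
    push_cast
    ring

theorem one_add_X_mul_derivative_logSeries : (1 + X) * d⁄dX ℝ logSeries = 1 := by
  ext (_ | m)
  · simp only [add_mul, one_mul, map_add, coeff_zero_X_mul, coeff_derivative, logSeries,
      coeff_mk, coeff_one]
    norm_num
  · simp only [add_mul, one_mul, map_add, coeff_succ_X_mul, logSeries, coeff_derivative, coeff_mk,
      coeff_one, if_neg (Nat.succ_ne_zero _)]
    push_cast
    field_simp
    ring

theorem coeff_logSeries_pow_self (n : ℕ) : coeff n (logSeries ^ n) = 1 := by
  simp [logSeries_eq_X_mul_Dlog, mul_pow, coeff_X_pow_mul', coeff_zero_eq_constantCoeff, Dlog]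

theorem coeff_logSeries_pow_succ (N m : ℕ) :
    ((N : ℝ) + 1) * coeff (N + 1) (logSeries ^ (m + 1)) + N * coeff N (logSeries ^ (m + 1)) =
      ((m : ℝ) + 1) * coeff N (logSeries ^ m) := by
  have h : (1 + X) * d⁄dX ℝ (logSeries ^ (m + 1)) = ((m : ℝ) + 1) • logSeries ^ m := by
    rw [Derivation.leibniz_pow, Nat.add_sub_cancel, nsmul_eq_mul, smul_eq_C_mul, map_add,
      map_one, map_natCast]
    push_cast
    linear_combination ((m + 1 : ℝ⟦X⟧) * logSeries ^ m) * one_add_X_mul_derivative_logSeries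
  have h := congrArg (coeff N) h
  rcases N with _ | N <;>
    simp only [add_mul, one_mul, map_add, coeff_zero_X_mul, coeff_succ_X_mul, coeff_derivative,
      map_smul, smul_eq_mul] at h <;>
    push_cast at h ⊢ <;>
    linear_combination h

theorem natCast_mul_coeff_logSeries_pow (s m : ℕ) :
    ((s + m : ℕ) : ℝ) * coeff (s + m) (logSeries ^ m) =
      m * coeff s (expSubOneDivX⁻¹ ^ (s + m)) := by
  induction m generalizing s with
  | zero => simp [coeff_one]
  | succ m ihm =>
    induction s with
    | zero => simp [coeff_logSeries_pow_self, coeff_zero_inv_expSubOneDivX_pow]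
    | succ t ihs =>
      have hL := coeff_logSeries_pow_succ (t + 1 + m) m
      have hB := coeff_inv_expSubOneDivX_pow_succ_succ (t + 1 + m) t
      have hm := ihm (t + 1)
      rw [show t + (m + 1) = t + 1 + m by ring] at ihs
      rw [show t + 1 + (m + 1) = t + 1 + m + 1 by ring]
      refine mul_left_cancel₀ (Nat.cast_ne_zero.mpr (by omega : t + 1 + m ≠ 0)) ?_
      push_cast at *
      linear_combination (t + 1 + m : ℝ) * hL + ((m : ℝ) + 1) * hm - (t + 1 + m : ℝ) * ihs
        - ((m : ℝ) + 1) * hB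

theorem S1_eq_factorial_div_mul_coeff {n m : ℕ} (hm : 1 ≤ m) (hmn : m ≤ n) :
    S1 n m = ((n - 1).factorial : ℝ) / ((m - 1).factorial : ℝ) *
      coeff (n - m) (expSubOneDivX⁻¹ ^ n) := by
  obtain ⟨s, rfl⟩ := Nat.exists_eq_add_of_le' hmn
  have key := natCast_mul_coeff_logSeries_pow s m
  rw [S1, ← Nat.mul_factorial_pred (by omega : s + m ≠ 0),
    ← Nat.mul_factorial_pred (by omega : m ≠ 0), Nat.add_sub_cancel]
  have hm0 : (m : ℝ) ≠ 0 := by positivity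
  field_simp
  push_cast at key ⊢
  linear_combination ((m - 1).factorial * (s + m - 1).factorial : ℝ) * key

theorem PowerSeries.coeff_pow_eq_sum_antidiagonalTuple {R : Type*} [CommSemiring R]
    (φ : R⟦X⟧) (n l : ℕ) :
    coeff l (φ ^ n) = ∑ f ∈ Finset.Nat.antidiagonalTuple n l, ∏ i, coeff (f i) φ := by
  rw [← Fin.prod_const, coeff_prod]
  exact sum_equiv Finsupp.equivFunOnFinite
    (fun g => by simp [mem_finsuppAntidiag, Finset.Nat.mem_antidiagonalTuple]) (fun _ _ => rfl)

theorem Finset.sum_Icc_eq_sum_range_sub {M : Type*} [AddCommMonoid M] (g : ℕ → M) {j n : ℕ}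
    (h : j ≤ n) : ∑ m ∈ Icc j n, g m = ∑ l ∈ range (n - j + 1), g (n - l) := by
  rw [range_eq_Ico, sum_Ico_reflect _ _ (by omega), ← Ico_add_one_right_eq_Icc,
    show n + 1 - (n - j + 1) = j by omega, Nat.sub_zero]

theorem stirling_sum_eq_bernoulli_multinomial_sum_general (k : ℤ) (n j : ℕ)
    (hj1 : 1 ≤ j) (hjn : j ≤ n) :
    ∑ m ∈ Finset.Icc j n, ((m.choose j : ℝ) / ((m : ℝ) - j + 1) ^ k) * S1 n m =
      ∑ l ∈ Finset.range (n - j + 1), ∑ f ∈ Finset.Nat.antidiagonalTuple n l,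
        ((n - 1).factorial : ℝ) /
            ((∏ i, ((f i).factorial : ℝ)) * ((n - 1 - l).factorial : ℝ)) *
          ((n - l).choose j : ℝ) *
          (∏ i, Bern (f i)) / ((n : ℝ) - l - j + 1) ^ k := by
  rw [sum_Icc_eq_sum_range_sub _ hjn]
  refine Finset.sum_congr rfl fun l hl => ?_
  have hl : l ≤ n - j := Nat.lt_succ_iff.mp (mem_range.mp hl)
  rw [S1_eq_factorial_div_mul_coeff (by omega) (Nat.sub_le n l), Nat.sub_sub_self (by omega),
    coeff_pow_eq_sum_antidiagonalTuple, mul_sum, mul_sum]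
  refine Finset.sum_congr rfl fun f _ => ?_
  rw [Nat.cast_sub (by omega : l ≤ n), show n - l - 1 = n - 1 - l by omega]
  simp only [Bern, expSubOneDivX, prod_mul_distrib]
  field_simp

/-- part of Theorem 2 of the paper. -/
theorem stirling_sum_eq_bernoulli_multinomial_sum (k : ℤ) (n j : ℕ)
    (hn : 1 ≤ n) (hj1 : 1 ≤ j) (hjn : j ≤ n) :
    ∑ m ∈ Finset.Icc j n, ((m.choose j : ℝ) / ((m : ℝ) - j + 1) ^ k) * S1 n m =
      ∑ l ∈ Finset.range (n - j + 1), ∑ f ∈ Finset.Nat.antidiagonalTuple n l,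
        ((n - 1).factorial : ℝ) /
            ((∏ i, ((f i).factorial : ℝ)) * ((n - 1 - l).factorial : ℝ)) *
          ((n - l).choose j : ℝ) *
          (∏ i, Bern (f i)) / ((n : ℝ) - l - j + 1) ^ k :=
  stirling_sum_eq_bernoulli_multinomial_sum_general k n j hj1 hjn
end

section
/- For every integer k, every integer n ≥ 0, and all x, y, the poly-Cauchy polynomials of the first kind satisfy the Sheffer-type addition formula C_n^(k)(x+y) = Σ_{j=0}^{n} (-1)^{n-j} C(n,j) C_j^(k)(x) · y^{(n-j)}, where y^{(m)} = y(y+1)⋯(y+m-1) denotes the rising factorial. -/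
open PowerSeries Finset

/-!
Writing `(1+t)^a` for `exp (a log (1+t))`, the series `E_a = (1+t)^a` is multiplicative in `a`
(substitution of `log (1+t)` is a ring map and `e^{at} e^{bt} = e^{(a+b)t}`), so
the generating function of `C^{(k)}(x+y)` is that of `C^{(k)}(x)` times `(1+t)^{-y}`.
The chain rule gives `(1+t) E_a' = a E_a`, i.e. `(n+1) e_{n+1} = (a-n) e_n`, so
`n! e_n = a(a-1)⋯(a-n+1)`, which at `a = -y` is `(-1)^n y^{(n)}`.
-/

open scoped Nat

namespace PowerSeries

variable {A : Type*} [CommRing A]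

theorem coeff_pow_eq_zero_of_lt {G : A⟦X⟧} (hG : constantCoeff G = 0) {n m : ℕ} (h : n < m) :
    coeff n (G ^ m) = 0 :=
  X_pow_dvd_iff.1 (pow_dvd_pow_of_dvd (X_dvd_iff.2 hG) m) n h

theorem constantCoeff_subst_of_constantCoeff_zero {f g : A⟦X⟧} (hg : constantCoeff g = 0) :
    constantCoeff (f.subst g) = constantCoeff f := by
  rw [← coeff_zero_eq_constantCoeff_apply, coeff_subst' (HasSubst.of_constantCoeff_zero' hg),
    finsum_eq_single _ 0 fun d hd => by simp [hg, zero_pow hd]]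
  simp

theorem derivative_rescale (a : A) (f : A⟦X⟧) :
    d⁄dX A (rescale a f) = C a * rescale a (d⁄dX A f) := by
  ext n
  simp only [coeff_derivative, coeff_rescale, coeff_C_mul, pow_succ]
  ring

variable [Algebra ℚ A]

theorem one_add_X_mul_derivative_log : (1 + X) * d⁄dX A (log A) = 1 := by
  ext n
  rw [deriv_log, add_mul, one_mul, map_add]
  cases n with
  | zero => simp
  | succ n => simp [coeff_succ_X_mul, pow_succ]

theorem rescale_exp_subst_log_add (a b : A) :
    (rescale (a + b) (exp A)).subst (log A) =
      (rescale a (exp A)).subst (log A) * (rescale b (exp A)).subst (log A) := by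
  rw [← exp_mul_exp_eq_exp_add, subst_mul HasSubst.log]

theorem one_add_X_mul_derivative_rescale_exp_subst_log (a : A) :
    (1 + X) * d⁄dX A ((rescale a (exp A)).subst (log A)) =
      C a * (rescale a (exp A)).subst (log A) := by
  rw [derivative_subst (HasSubst.log (A := A)), derivative_rescale, derivative_exp,
    ← smul_eq_C_mul, subst_smul (HasSubst.log (A := A)), smul_eq_C_mul]
  linear_combination
    (C a * (rescale a (exp A)).subst (log A)) * one_add_X_mul_derivative_log (A := A)

theorem coeff_succ_rescale_exp_subst_log (a : A) (n : ℕ) :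
    (n + 1) * coeff (n + 1) ((rescale a (exp A)).subst (log A)) =
      (a - n) * coeff n ((rescale a (exp A)).subst (log A)) := by
  have h := congrArg (coeff n) (one_add_X_mul_derivative_rescale_exp_subst_log a)
  rw [add_mul, one_mul, map_add, coeff_C_mul, coeff_derivative] at h
  cases n with
  | zero =>
    simp only [coeff_zero_X_mul, add_zero, Nat.cast_zero, zero_add, sub_zero] at h ⊢
    linear_combination h
  | succ n =>
    rw [coeff_succ_X_mul, coeff_derivative] at h
    push_cast at h ⊢
    linear_combination h

theorem factorial_mul_coeff_rescale_exp_subst_log (a : A) (n : ℕ) :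
    (n ! : A) * coeff n ((rescale a (exp A)).subst (log A)) = (descPochhammer A n).eval a := by
  induction n with
  | zero =>
    rw [coeff_zero_eq_constantCoeff_apply,
      constantCoeff_subst_of_constantCoeff_zero constantCoeff_log,
      ← coeff_zero_eq_constantCoeff_apply]
    simp
  | succ n ih =>
    rw [descPochhammer_succ_eval, ← ih, Nat.factorial_succ, Nat.cast_mul, Nat.cast_succ,
      mul_comm _ (n ! : A), mul_assoc, coeff_succ_rescale_exp_subst_log]
    ring

end PowerSeries

theorem logSeries_eq_log : logSeries = log ℝ := by
  ext n
  simp only [logSeries, coeff_mk, coeff_log]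
  split_ifs <;> simp

theorem psComp_eq_subst (F : ℝ⟦X⟧) {G : ℝ⟦X⟧} (hG : constantCoeff G = 0) :
    psComp F G = F.subst G := by
  ext n
  rw [psComp, coeff_mk, coeff_subst' (HasSubst.of_constantCoeff_zero' hG),
    finsum_eq_sum_of_support_subset (s := range (n + 1))]
  · simp only [smul_eq_mul]
  · intro m hm
    rw [coe_range, Set.mem_Iio, Nat.lt_succ_iff]
    by_contra! h
    exact hm (by simp [coeff_pow_eq_zero_of_lt hG h])

theorem descPochhammer_eval_neg_eq_risingFactorial (y : ℝ) (m : ℕ) :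
    (descPochhammer ℝ m).eval (-y) = (-1) ^ m * risingFactorial y m := by
  rw [descPochhammer_eval_eq_prod_range, risingFactorial]
  calc ∏ i ∈ range m, (-y - i) = ∏ i ∈ range m, -(y + i) :=
        prod_congr rfl fun i _ => by ring
    _ = _ := by rw [prod_neg, card_range]

/-- Sheffer-type addition formula for the poly-Cauchy polynomials. -/
theorem polyCauchy_add (k : ℤ) (n : ℕ) (x y : ℝ) :
    polyCauchy k n (x + y) =
      ∑ j ∈ Finset.range (n + 1),
        (-1 : ℝ) ^ (n - j) * (n.choose j : ℝ) * polyCauchy k j x *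
          risingFactorial y (n - j) := by
  simp only [polyCauchy, logSeries_eq_log, psComp_eq_subst _ constantCoeff_log]
  rw [neg_add, rescale_exp_subst_log_add, ← mul_assoc, coeff_mul,
    Nat.sum_antidiagonal_eq_sum_range_succ_mk, mul_sum]
  refine sum_congr rfl fun j hj => ?_
  have hjn : j ≤ n := Nat.lt_succ_iff.1 (mem_range.1 hj)
  have hfact : (n ! : ℝ) = n.choose j * j ! * (n - j)! := by
    rw [← Nat.choose_mul_factorial_mul_factorial hjn]
    push_cast
    ring
  have hcoeff := factorial_mul_coeff_rescale_exp_subst_log (-y) (n - j)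
  rw [descPochhammer_eval_neg_eq_risingFactorial] at hcoeff
  rw [hfact]
  linear_combination (n.choose j * j ! *
    coeff j (subst (log ℝ) (Lif k) * subst (log ℝ) (rescale (-x) (exp ℝ))) : ℝ) * hcoeff
end
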